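/- Let A ∈ ℝ^{n×N}, τ, λ > 0 with τ‖A‖²_{2→2} ≤ 1, Y ∈ ℝ^{n×m}, L ≥ 2, and B_out > 0. Then for any orthogonal matrices Φ₁, Φ₂, Ψ₁, Ψ₂ ∈ O(N), ‖σ(Ψ₁ f_{Φ₁}^L(Y)) − σ(Ψ₂ f_{Φ₂}^L(Y))‖_F ≤ τ‖Y‖_F · (L·‖A‖_{2→2}·‖Ψ₁ − Ψ₂‖_{2→2} + L(L+3)·‖AΦ₁ − AΦ₂‖_{2→2}), where σ is applied columnwise. -/

import Mathlib

open MeasureTheory Matrix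
open scoped ENNReal

noncomputable def soft (mu x : ℝ) : ℝ := Real.sign x * max 0 (|x| - mu)

noncomputable def softMat {a b : ℕ} (mu : ℝ) (M : Matrix (Fin a) (Fin b) ℝ) :
    Matrix (Fin a) (Fin b) ℝ := Matrix.of fun i j => soft mu (M i j)

noncomputable def specNorm {a b : ℕ} (A : Matrix (Fin a) (Fin b) ℝ) : ℝ :=
  ‖LinearMap.toContinuousLinearMap (Matrix.toEuclideanLin A)‖

noncomputable def frobNorm {a b : ℕ} (A : Matrix (Fin a) (Fin b) ℝ) : ℝ :=
  Real.sqrt (∑ i, ∑ j, (A i j) ^ 2)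

noncomputable def l2 {N : ℕ} (x : Fin N → ℝ) : ℝ := Real.sqrt (∑ i, x i ^ 2)

noncomputable def sigma {N : ℕ} (B : ℝ) (x : Fin N → ℝ) : Fin N → ℝ :=
  if l2 x ≤ B then x else (B / l2 x) • x

noncomputable def sigmaMat {N m : ℕ} (B : ℝ) (M : Matrix (Fin N) (Fin m) ℝ) :
    Matrix (Fin N) (Fin m) ℝ := Matrix.of fun i j => sigma B (fun k => M k j) i

def IsOrthogonal {N : ℕ} (Φ : Matrix (Fin N) (Fin N) ℝ) : Prop := Φᵀ * Φ = 1

noncomputable def ista {n N m : ℕ} (A : Matrix (Fin n) (Fin N) ℝ) (τ lam : ℝ)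
    (Φ : Matrix (Fin N) (Fin N) ℝ) (Y : Matrix (Fin n) (Fin m) ℝ) :
    ℕ → Matrix (Fin N) (Fin m) ℝ
  | 0 => 0
  | l + 1 => softMat (τ * lam)
      ((1 - τ • (Φᵀ * Aᵀ * A * Φ)) * ista A τ lam Φ Y l + τ • ((A * Φ)ᵀ * Y))

noncomputable def istaVec {n N : ℕ} (A : Matrix (Fin n) (Fin N) ℝ) (τ lam : ℝ)
    (Φ : Matrix (Fin N) (Fin N) ℝ) (y : Fin n → ℝ) : ℕ → Fin N → ℝ
  | 0 => 0
  | l + 1 => soft (τ * lam) ∘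
      ((1 - τ • (Φᵀ * Aᵀ * A * Φ)) *ᵥ istaVec A τ lam Φ y l + τ • ((A * Φ)ᵀ *ᵥ y))

noncomputable def KL {n N m : ℕ} (A : Matrix (Fin n) (Fin N) ℝ) (τ : ℝ)
    (Y : Matrix (Fin n) (Fin m) ℝ) (L : ℕ) : ℝ :=
  τ * frobNorm Y * specNorm (1 - τ • (Aᵀ * A)) ^ (L - 1)
    + τ * frobNorm Y * ∑ l ∈ Finset.Icc 2 L,
        specNorm (1 - τ • (Aᵀ * A)) ^ (L - l) *
          (1 + 2 * τ * specNorm A ^ 2 *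
            ∑ k ∈ Finset.range (l - 1), specNorm (1 - τ • (Aᵀ * A)) ^ k)

noncomputable def ML {n N m : ℕ} (A : Matrix (Fin n) (Fin N) ℝ) (τ : ℝ)
    (Y : Matrix (Fin n) (Fin m) ℝ) (L : ℕ) : ℝ :=
  τ * specNorm A * frobNorm Y * ∑ k ∈ Finset.range L, specNorm (1 - τ • (Aᵀ * A)) ^ k

noncomputable def coveringNumber {α : Type*} (d : α → α → ℝ) (s : Set α) (ε : ℝ) : ℝ≥0∞ :=
  ⨅ (t : Finset α) (_ : ∀ x ∈ s, ∃ y ∈ t, d x y ≤ ε), (t.card : ℝ≥0∞)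

/-!
Soft thresholding and the radial retraction `σ` are `1`-Lipschitz, and since the layers of
`f_Φ` only involve the effective dictionary `C = AΦ`, with `‖C‖ ≤ ‖A‖`, the linear part
`I - τ CᵀC` of a layer has spectral norm at most `1` when `τ‖A‖² ≤ 1`.
Hence one layer adds at most `τ‖A‖‖Y‖_F` to the Frobenius norm, so `‖f^l(Y)‖_F ≤ lτ‖A‖‖Y‖_F`,
and replacing `C₁` by `C₂` in layer `l + 1` adds at most
`τ‖C₁ - C₂‖ (2‖A‖‖f^l(Y)‖_F + ‖Y‖_F) ≤ (2l + 1) τ‖Y‖_F ‖C₁ - C₂‖` to the error, which sums to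
`L² τ‖Y‖_F ‖C₁ - C₂‖`. The outer matrices are handled by
`Ψ₁X₁ - Ψ₂X₂ = (Ψ₁ - Ψ₂)X₁ + Ψ₂(X₁ - X₂)`.
-/

open scoped RealInnerProductSpace Matrix.Norms.L2Operator

lemma soft_eq_sub_clamp {mu : ℝ} (hmu : 0 ≤ mu) (x : ℝ) :
    soft mu x = x - max (-mu) (min mu x) := by
  rcases lt_trichotomy x 0 with hx | rfl | hx
  · rw [soft, Real.sign_of_neg hx, abs_of_neg hx]
    simp only [max_def, min_def]
    split_ifs <;> linarith
  · simp [soft, hmu]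
  · rw [soft, Real.sign_of_pos hx, abs_of_pos hx]
    simp only [max_def, min_def]
    split_ifs <;> linarith

lemma abs_soft_sub_soft_le {mu : ℝ} (hmu : 0 ≤ mu) (x y : ℝ) :
    |soft mu x - soft mu y| ≤ |x - y| := by
  wlog hxy : x ≤ y generalizing x y
  · rw [abs_sub_comm, abs_sub_comm x]
    exact this y x (le_of_not_ge hxy)
  rw [soft_eq_sub_clamp hmu, soft_eq_sub_clamp hmu, abs_of_nonpos (sub_nonpos.2 hxy), abs_le]
  simp only [max_def, min_def]
  constructor <;> split_ifs <;> linarith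

lemma abs_soft_le {mu : ℝ} (hmu : 0 ≤ mu) (x : ℝ) : |soft mu x| ≤ |x| := by
  simpa [soft] using abs_soft_sub_soft_le hmu x 0

lemma min_one_div_mul {a B : ℝ} (ha : 0 ≤ a) (hB : 0 ≤ B) : min 1 (B / a) * a = min a B := by
  rcases ha.eq_or_lt with rfl | ha
  · simp [hB]
  · rw [min_mul_of_nonneg _ _ ha.le, one_mul, div_mul_cancel₀ _ ha.ne']

section RadialRetraction

variable {E : Type*} [NormedAddCommGroup E] [InnerProductSpace ℝ E]

lemma norm_smul_sub_smul_sq (p q : ℝ) (x y : E) :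
    ‖p • x - q • y‖ ^ 2 = (p * ‖x‖) ^ 2 + (q * ‖y‖) ^ 2 - 2 * (p * q) * ⟪x, y⟫ := by
  rw [norm_sub_sq_real, norm_smul, norm_smul, real_inner_smul_left, real_inner_smul_right,
    Real.norm_eq_abs, Real.norm_eq_abs, mul_pow, mul_pow, sq_abs, sq_abs]
  ring

/-- At `x = 0` the factor is the junk value `B / 0 = 0`, harmless since it multiplies `0`. -/
noncomputable def radialRetraction (B : ℝ) (x : E) : E := min 1 (B / ‖x‖) • x

theorem norm_radialRetraction_sub_le {B : ℝ} (hB : 0 ≤ B) (x y : E) :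
    ‖radialRetraction B x - radialRetraction B y‖ ≤ ‖x - y‖ := by
  unfold radialRetraction
  -- With `p ‖x‖ = min ‖x‖ B` and `q ‖y‖ = min ‖y‖ B`, Cauchy–Schwarz reduces the claim to
  -- `(min ‖x‖ B - min ‖y‖ B)² ≤ (‖x‖ - ‖y‖)²`.
  set p := min 1 (B / ‖x‖)
  set q := min 1 (B / ‖y‖)
  have hp : 0 ≤ p ∧ p ≤ 1 := ⟨le_min zero_le_one (by positivity), min_le_left _ _⟩
  have hq : 0 ≤ q ∧ q ≤ 1 := ⟨le_min zero_le_one (by positivity), min_le_left _ _⟩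
  have hpx : p * ‖x‖ = min ‖x‖ B := min_one_div_mul (norm_nonneg x) hB
  have hqy : q * ‖y‖ = min ‖y‖ B := min_one_div_mul (norm_nonneg y) hB
  have hmin : (min ‖x‖ B - min ‖y‖ B) ^ 2 ≤ (‖x‖ - ‖y‖) ^ 2 := by
    have h := abs_min_sub_min_le_max ‖x‖ B ‖y‖ B
    rw [sub_self, abs_zero, max_eq_left (abs_nonneg _)] at h
    exact sq_le_sq.2 h
  have hcs : ⟪x, y⟫ * (1 - p * q) ≤ ‖x‖ * ‖y‖ * (1 - p * q) :=
    mul_le_mul_of_nonneg_right (real_inner_le_norm x y) (by nlinarith)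
  have hpq : p * q * (‖x‖ * ‖y‖) = min ‖x‖ B * min ‖y‖ B := by rw [← hpx, ← hqy]; ring
  refine (pow_le_pow_iff_left₀ (norm_nonneg _) (norm_nonneg _) two_ne_zero).1 ?_
  rw [norm_smul_sub_smul_sq, norm_sub_sq_real, hpx, hqy]
  linarith

end RadialRetraction

theorem ContinuousLinearMap.norm_one_sub_smul_adjoint_comp_self_le_one
    {E F : Type*} [NormedAddCommGroup E] [InnerProductSpace ℝ E] [CompleteSpace E]
    [NormedAddCommGroup F] [InnerProductSpace ℝ F] [CompleteSpace F]
    (T : E →L[ℝ] F) {τ : ℝ} (hτ : 0 ≤ τ) (hT : τ * ‖T‖ ^ 2 ≤ 1) :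
    ‖1 - τ • (adjoint T ∘L T)‖ ≤ 1 := by
  refine opNorm_le_bound _ zero_le_one fun x => ?_
  have hinner : ⟪x, adjoint T (T x)⟫ = ‖T x‖ ^ 2 := by
    rw [adjoint_inner_right, real_inner_self_eq_norm_sq]
  have hadj : ‖adjoint T (T x)‖ ^ 2 ≤ ‖T‖ ^ 2 * ‖T x‖ ^ 2 := by
    rw [← mul_pow]
    gcongr
    simpa using (adjoint T).le_opNorm (T x)
  refine (pow_le_pow_iff_left₀ (norm_nonneg _) (by positivity) two_ne_zero).1 ?_
  simp only [_root_.sub_apply, one_apply_eq_self, _root_.smul_apply, comp_apply]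
  rw [norm_sub_sq_real, real_inner_smul_right, norm_smul, hinner, Real.norm_eq_abs,
    abs_of_nonneg hτ, one_mul]
  nlinarith [mul_le_mul_of_nonneg_left hadj (sq_nonneg τ),
    mul_le_mul_of_nonneg_right hT (mul_nonneg hτ (sq_nonneg ‖T x‖))]

section MatrixNorms

variable {a b c : ℕ}

lemma specNorm_def (M : Matrix (Fin a) (Fin b) ℝ) : specNorm M = ‖M‖ := rfl

lemma specNorm_nonneg (M : Matrix (Fin a) (Fin b) ℝ) : 0 ≤ specNorm M := norm_nonneg M

lemma specNorm_add_le (M M' : Matrix (Fin a) (Fin b) ℝ) :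
    specNorm (M + M') ≤ specNorm M + specNorm M' :=
  norm_add_le M M'

lemma specNorm_sub_rev (M M' : Matrix (Fin a) (Fin b) ℝ) :
    specNorm (M - M') = specNorm (M' - M) :=
  norm_sub_rev M M'

lemma specNorm_transpose (M : Matrix (Fin a) (Fin b) ℝ) : specNorm Mᵀ = specNorm M := by
  rw [specNorm_def, specNorm_def, ← conjTranspose_eq_transpose_of_trivial,
    l2_opNorm_conjTranspose]

lemma specNorm_mul_le (P : Matrix (Fin a) (Fin b) ℝ) (M : Matrix (Fin b) (Fin c) ℝ) :
    specNorm (P * M) ≤ specNorm P * specNorm M :=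
  l2_opNorm_mul P M

lemma IsOrthogonal.specNorm_le_one {Φ : Matrix (Fin a) (Fin a) ℝ} (hΦ : IsOrthogonal Φ) :
    specNorm Φ ≤ 1 := by
  rcases subsingleton_or_nontrivial (Matrix (Fin a) (Fin a) ℝ) with h | h
  · simp [specNorm_def, Subsingleton.elim Φ 0]
  · rw [specNorm_def]
    refine (CStarRing.norm_of_mem_unitary (mem_unitaryGroup_iff'.2 ?_)).le
    rwa [star_eq_conjTranspose, conjTranspose_eq_transpose_of_trivial]

lemma specNorm_mul_orthogonal_le (M : Matrix (Fin a) (Fin b) ℝ) {Φ : Matrix (Fin b) (Fin b) ℝ}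
    (hΦ : IsOrthogonal Φ) : specNorm (M * Φ) ≤ specNorm M :=
  (specNorm_mul_le M Φ).trans (mul_le_of_le_one_right (specNorm_nonneg M) hΦ.specNorm_le_one)

lemma specNorm_one_sub_smul_transpose_mul_self_le_one (C : Matrix (Fin a) (Fin b) ℝ) {τ : ℝ}
    (hτ : 0 ≤ τ) (hC : τ * specNorm C ^ 2 ≤ 1) : specNorm (1 - τ • (Cᵀ * C)) ≤ 1 := by
  set T := LinearMap.toContinuousLinearMap (toEuclideanLin C)
  have hT : toEuclideanCLM (𝕜 := ℝ) (Cᵀ * C) = ContinuousLinearMap.adjoint T ∘L T := by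
    ext x i
    simp [T, ← LinearMap.adjoint_toContinuousLinearMap,
      ← toEuclideanLin_conjTranspose_eq_adjoint, mulVec_mulVec]
  rw [specNorm_def, cstar_norm_def, map_sub, map_one, map_smul, hT]
  exact T.norm_one_sub_smul_adjoint_comp_self_le_one hτ hC

lemma specNorm_transpose_mul_self_sub_le {C₁ C₂ : Matrix (Fin a) (Fin b) ℝ} {K : ℝ}
    (h₁ : specNorm C₁ ≤ K) (h₂ : specNorm C₂ ≤ K) :
    specNorm (C₁ᵀ * C₁ - C₂ᵀ * C₂) ≤ 2 * K * specNorm (C₁ - C₂) := by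
  have hD := specNorm_nonneg (C₁ - C₂)
  calc specNorm (C₁ᵀ * C₁ - C₂ᵀ * C₂) = specNorm (C₁ᵀ * (C₁ - C₂) + (C₁ - C₂)ᵀ * C₂) := by
        rw [transpose_sub, Matrix.mul_sub, Matrix.sub_mul]
        abel_nf
    _ ≤ specNorm C₁ᵀ * specNorm (C₁ - C₂) + specNorm (C₁ - C₂)ᵀ * specNorm C₂ :=
        (specNorm_add_le _ _).trans (add_le_add (specNorm_mul_le _ _) (specNorm_mul_le _ _))
    _ ≤ K * specNorm (C₁ - C₂) + specNorm (C₁ - C₂) * K := by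
        rw [specNorm_transpose, specNorm_transpose]
        gcongr
    _ = 2 * K * specNorm (C₁ - C₂) := by ring

end MatrixNorms

section Frobenius

variable {a b c : ℕ}

def toColumns :
    Matrix (Fin a) (Fin b) ℝ →ₗ[ℝ] PiLp 2 fun _ : Fin b => EuclideanSpace ℝ (Fin a) where
  toFun M := WithLp.toLp 2 fun j => WithLp.toLp 2 (Mᵀ j)
  map_add' _ _ := rfl
  map_smul' _ _ := rfl

@[simp]
lemma toColumns_apply (M : Matrix (Fin a) (Fin b) ℝ) (j : Fin b) :
    toColumns M j = WithLp.toLp 2 (Mᵀ j) :=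
  rfl

lemma frobNorm_eq_norm_toColumns (M : Matrix (Fin a) (Fin b) ℝ) :
    frobNorm M = ‖toColumns M‖ := by
  rw [frobNorm, PiLp.norm_eq_of_L2, Finset.sum_comm]
  congr 1
  refine Finset.sum_congr rfl fun j _ => ?_
  rw [EuclideanSpace.norm_eq, Real.sq_sqrt (by positivity)]
  simp

lemma frobNorm_nonneg (M : Matrix (Fin a) (Fin b) ℝ) : 0 ≤ frobNorm M := Real.sqrt_nonneg _

lemma frobNorm_add_le (M M' : Matrix (Fin a) (Fin b) ℝ) :
    frobNorm (M + M') ≤ frobNorm M + frobNorm M' := by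
  simp only [frobNorm_eq_norm_toColumns, map_add]
  exact norm_add_le _ _

lemma frobNorm_smul (r : ℝ) (M : Matrix (Fin a) (Fin b) ℝ) :
    frobNorm (r • M) = |r| * frobNorm M := by
  simp only [frobNorm_eq_norm_toColumns, map_smul, norm_smul, Real.norm_eq_abs]

lemma frobNorm_le_of_abs_le {M M' : Matrix (Fin a) (Fin b) ℝ} (h : ∀ i j, |M i j| ≤ |M' i j|) :
    frobNorm M ≤ frobNorm M' :=
  Real.sqrt_le_sqrt <|
    Finset.sum_le_sum fun i _ => Finset.sum_le_sum fun j _ => sq_le_sq.2 (h i j)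

lemma frobNorm_le_mul_of_norm_col_le {M : Matrix (Fin a) (Fin b) ℝ}
    {M' : Matrix (Fin c) (Fin b) ℝ} {r : ℝ} (hr : 0 ≤ r)
    (h : ∀ j, ‖WithLp.toLp 2 (Mᵀ j)‖ ≤ r * ‖WithLp.toLp 2 (M'ᵀ j)‖) :
    frobNorm M ≤ r * frobNorm M' := by
  rw [frobNorm_eq_norm_toColumns, frobNorm_eq_norm_toColumns, PiLp.norm_eq_of_L2,
    PiLp.norm_eq_of_L2, ← Real.sqrt_sq hr, ← Real.sqrt_mul (sq_nonneg r), Finset.mul_sum]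
  gcongr with j
  rw [← mul_pow]
  gcongr
  exact h j

lemma frobNorm_mul_le (P : Matrix (Fin a) (Fin b) ℝ) (M : Matrix (Fin b) (Fin c) ℝ) :
    frobNorm (P * M) ≤ specNorm P * frobNorm M := by
  refine frobNorm_le_mul_of_norm_col_le (specNorm_nonneg P) fun j => ?_
  have hcol : (P * M)ᵀ j = P *ᵥ Mᵀ j := by
    ext i
    simp [mul_apply, mulVec, dotProduct]
  simpa [hcol, specNorm_def] using l2_opNorm_mulVec P (WithLp.toLp 2 (Mᵀ j))

lemma frobNorm_mul_le_of_specNorm_le {P : Matrix (Fin a) (Fin b) ℝ} {r : ℝ}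
    (hP : specNorm P ≤ r) (M : Matrix (Fin b) (Fin c) ℝ) : frobNorm (P * M) ≤ r * frobNorm M :=
  (frobNorm_mul_le P M).trans (mul_le_mul_of_nonneg_right hP (frobNorm_nonneg M))

lemma frobNorm_softMat_sub_le {mu : ℝ} (hmu : 0 ≤ mu) (M M' : Matrix (Fin a) (Fin b) ℝ) :
    frobNorm (softMat mu M - softMat mu M') ≤ frobNorm (M - M') :=
  frobNorm_le_of_abs_le fun i j => abs_soft_sub_soft_le hmu (M i j) (M' i j)

lemma frobNorm_softMat_le {mu : ℝ} (hmu : 0 ≤ mu) (M : Matrix (Fin a) (Fin b) ℝ) :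
    frobNorm (softMat mu M) ≤ frobNorm M :=
  frobNorm_le_of_abs_le fun i j => abs_soft_le hmu (M i j)

lemma toLp_sigma {B : ℝ} (hB : 0 ≤ B) (x : Fin a → ℝ) :
    WithLp.toLp 2 (sigma B x) = radialRetraction B (WithLp.toLp 2 x) := by
  have hl2 : l2 x = ‖WithLp.toLp 2 x‖ := by
    simp [l2, EuclideanSpace.norm_eq]
  rw [sigma, hl2, radialRetraction]
  split_ifs with hx
  · rcases (norm_nonneg (WithLp.toLp 2 x)).eq_or_lt with h0 | h0
    · obtain rfl : x = 0 := by simpa using h0.symm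
      simp
    · rw [min_eq_left ((one_le_div h0).2 hx), one_smul]
  · rw [min_eq_right ((div_le_one (hB.trans_lt (not_le.1 hx))).2 (not_le.1 hx).le),
      WithLp.toLp_smul]

lemma frobNorm_sigmaMat_sub_le {B : ℝ} (hB : 0 ≤ B) (M M' : Matrix (Fin a) (Fin b) ℝ) :
    frobNorm (sigmaMat B M - sigmaMat B M') ≤ frobNorm (M - M') := by
  rw [← one_mul (frobNorm (M - M'))]
  refine frobNorm_le_mul_of_norm_col_le zero_le_one fun j => ?_
  have hcol : (sigmaMat B M - sigmaMat B M')ᵀ j = sigma B (Mᵀ j) - sigma B (M'ᵀ j) := rfl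
  have hcol' : (M - M')ᵀ j = Mᵀ j - M'ᵀ j := rfl
  rw [hcol, hcol', WithLp.toLp_sub, WithLp.toLp_sub, toLp_sigma hB, toLp_sigma hB, one_mul]
  exact norm_radialRetraction_sub_le hB _ _

end Frobenius

section Ista

variable {n N m : ℕ} {τ lam : ℝ}

noncomputable def istaLayer (C : Matrix (Fin n) (Fin N) ℝ) (τ lam : ℝ)
    (Y : Matrix (Fin n) (Fin m) ℝ) (X : Matrix (Fin N) (Fin m) ℝ) : Matrix (Fin N) (Fin m) ℝ :=
  softMat (τ * lam) ((1 - τ • (Cᵀ * C)) * X + τ • (Cᵀ * Y))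

lemma ista_succ (A : Matrix (Fin n) (Fin N) ℝ) (τ lam : ℝ) (Φ : Matrix (Fin N) (Fin N) ℝ)
    (Y : Matrix (Fin n) (Fin m) ℝ) (l : ℕ) :
    ista A τ lam Φ Y (l + 1) = istaLayer (A * Φ) τ lam Y (ista A τ lam Φ Y l) := by
  simp only [ista, istaLayer, transpose_mul, Matrix.mul_assoc]

lemma frobNorm_istaLayer_le {C : Matrix (Fin n) (Fin N) ℝ} (hτ : 0 ≤ τ) (hlam : 0 ≤ lam)
    (hC : τ * specNorm C ^ 2 ≤ 1) (Y : Matrix (Fin n) (Fin m) ℝ)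
    (X : Matrix (Fin N) (Fin m) ℝ) :
    frobNorm (istaLayer C τ lam Y X) ≤ frobNorm X + τ * (specNorm C * frobNorm Y) := by
  calc frobNorm (istaLayer C τ lam Y X)
      ≤ frobNorm ((1 - τ • (Cᵀ * C)) * X) + frobNorm (τ • (Cᵀ * Y)) :=
        (frobNorm_softMat_le (mul_nonneg hτ hlam) _).trans (frobNorm_add_le _ _)
    _ ≤ 1 * frobNorm X + τ * (specNorm C * frobNorm Y) := by
        rw [frobNorm_smul, abs_of_nonneg hτ]
        gcongr
        · exact frobNorm_mul_le_of_specNorm_le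
            (specNorm_one_sub_smul_transpose_mul_self_le_one C hτ hC) X
        · exact (frobNorm_mul_le _ Y).trans_eq (by rw [specNorm_transpose])
    _ = frobNorm X + τ * (specNorm C * frobNorm Y) := by rw [one_mul]

lemma frobNorm_istaLayer_sub_le {C₁ C₂ : Matrix (Fin n) (Fin N) ℝ} {K : ℝ} (hτ : 0 ≤ τ)
    (hlam : 0 ≤ lam) (hC₁ : τ * specNorm C₁ ^ 2 ≤ 1) (hK₁ : specNorm C₁ ≤ K)
    (hK₂ : specNorm C₂ ≤ K) (Y : Matrix (Fin n) (Fin m) ℝ) (X₁ X₂ : Matrix (Fin N) (Fin m) ℝ) :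
    frobNorm (istaLayer C₁ τ lam Y X₁ - istaLayer C₂ τ lam Y X₂) ≤
      frobNorm (X₁ - X₂) + τ * specNorm (C₁ - C₂) * (2 * K * frobNorm X₂ + frobNorm Y) := by
  set T := 1 - τ • (C₁ᵀ * C₁)
  have hsplit : (T * X₁ + τ • (C₁ᵀ * Y)) - ((1 - τ • (C₂ᵀ * C₂)) * X₂ + τ • (C₂ᵀ * Y)) =
      T * (X₁ - X₂) + τ • ((C₂ᵀ * C₂ - C₁ᵀ * C₁) * X₂ + (C₁ - C₂)ᵀ * Y) := by
    simp only [T, Matrix.sub_mul, Matrix.mul_sub, Matrix.one_mul, Matrix.smul_mul,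
      transpose_sub, smul_add, smul_sub]
    abel
  calc frobNorm (istaLayer C₁ τ lam Y X₁ - istaLayer C₂ τ lam Y X₂)
      ≤ frobNorm (T * (X₁ - X₂) + τ • ((C₂ᵀ * C₂ - C₁ᵀ * C₁) * X₂ + (C₁ - C₂)ᵀ * Y)) := by
        rw [← hsplit]
        exact frobNorm_softMat_sub_le (mul_nonneg hτ hlam) _ _
    _ ≤ frobNorm (T * (X₁ - X₂)) +
          τ * (frobNorm ((C₂ᵀ * C₂ - C₁ᵀ * C₁) * X₂) + frobNorm ((C₁ - C₂)ᵀ * Y)) := by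
        refine (frobNorm_add_le _ _).trans ?_
        rw [frobNorm_smul, abs_of_nonneg hτ]
        gcongr
        exact frobNorm_add_le _ _
    _ ≤ 1 * frobNorm (X₁ - X₂) +
          τ * (2 * K * specNorm (C₁ - C₂) * frobNorm X₂ + specNorm (C₁ - C₂) * frobNorm Y) := by
        gcongr
        · exact frobNorm_mul_le_of_specNorm_le
            (specNorm_one_sub_smul_transpose_mul_self_le_one C₁ hτ hC₁) _
        · refine frobNorm_mul_le_of_specNorm_le ?_ X₂
          rw [specNorm_sub_rev C₁]
          exact specNorm_transpose_mul_self_sub_le hK₂ hK₁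
        · exact (frobNorm_mul_le _ Y).trans_eq (by rw [specNorm_transpose])
    _ = frobNorm (X₁ - X₂) + τ * specNorm (C₁ - C₂) * (2 * K * frobNorm X₂ + frobNorm Y) := by
        ring

lemma mul_specNorm_mul_orthogonal_sq_le (A : Matrix (Fin n) (Fin N) ℝ) (hτ : 0 ≤ τ)
    (hA : τ * specNorm A ^ 2 ≤ 1) {Φ : Matrix (Fin N) (Fin N) ℝ} (hΦ : IsOrthogonal Φ) :
    τ * specNorm (A * Φ) ^ 2 ≤ 1 :=
  le_trans (by gcongr; exacts [specNorm_nonneg _, specNorm_mul_orthogonal_le A hΦ]) hA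

lemma frobNorm_ista_le (A : Matrix (Fin n) (Fin N) ℝ) (hτ : 0 ≤ τ) (hlam : 0 ≤ lam)
    (hA : τ * specNorm A ^ 2 ≤ 1) {Φ : Matrix (Fin N) (Fin N) ℝ} (hΦ : IsOrthogonal Φ)
    (Y : Matrix (Fin n) (Fin m) ℝ) (l : ℕ) :
    frobNorm (ista A τ lam Φ Y l) ≤ l * (τ * specNorm A * frobNorm Y) := by
  induction l with
  | zero => simp [ista, frobNorm]
  | succ l ih =>
    rw [ista_succ]
    calc _ ≤ frobNorm (ista A τ lam Φ Y l) + τ * (specNorm (A * Φ) * frobNorm Y) :=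
          frobNorm_istaLayer_le hτ hlam (mul_specNorm_mul_orthogonal_sq_le A hτ hA hΦ) Y _
      _ ≤ l * (τ * specNorm A * frobNorm Y) + τ * (specNorm A * frobNorm Y) := by
          gcongr
          · exact frobNorm_nonneg Y
          · exact specNorm_mul_orthogonal_le A hΦ
      _ = (l + 1 : ℕ) * (τ * specNorm A * frobNorm Y) := by push_cast; ring

lemma frobNorm_ista_sub_le (A : Matrix (Fin n) (Fin N) ℝ) (hτ : 0 ≤ τ) (hlam : 0 ≤ lam)
    (hA : τ * specNorm A ^ 2 ≤ 1) {Φ₁ Φ₂ : Matrix (Fin N) (Fin N) ℝ} (hΦ₁ : IsOrthogonal Φ₁)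
    (hΦ₂ : IsOrthogonal Φ₂) (Y : Matrix (Fin n) (Fin m) ℝ) (l : ℕ) :
    frobNorm (ista A τ lam Φ₁ Y l - ista A τ lam Φ₂ Y l) ≤
      l ^ 2 * (τ * frobNorm Y * specNorm (A * Φ₁ - A * Φ₂)) := by
  induction l with
  | zero => simp [ista, frobNorm]
  | succ l ih =>
    set D := specNorm (A * Φ₁ - A * Φ₂)
    have hD : 0 ≤ τ * D * frobNorm Y :=
      mul_nonneg (mul_nonneg hτ (specNorm_nonneg _)) (frobNorm_nonneg Y)
    rw [ista_succ, ista_succ]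
    calc _ ≤ frobNorm (ista A τ lam Φ₁ Y l - ista A τ lam Φ₂ Y l) +
          τ * D * (2 * specNorm A * frobNorm (ista A τ lam Φ₂ Y l) + frobNorm Y) :=
          frobNorm_istaLayer_sub_le hτ hlam (mul_specNorm_mul_orthogonal_sq_le A hτ hA hΦ₁)
            (specNorm_mul_orthogonal_le A hΦ₁) (specNorm_mul_orthogonal_le A hΦ₂) Y _ _
      _ ≤ l ^ 2 * (τ * frobNorm Y * D) +
          τ * D * (2 * specNorm A * (l * (τ * specNorm A * frobNorm Y)) + frobNorm Y) := by
          gcongr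
          · exact mul_nonneg hτ (specNorm_nonneg _)
          · exact mul_nonneg zero_le_two (specNorm_nonneg A)
          · exact frobNorm_ista_le A hτ hlam hA hΦ₂ Y l
      _ ≤ (l + 1 : ℕ) ^ 2 * (τ * frobNorm Y * D) := by
          push_cast
          nlinarith [mul_le_mul_of_nonneg_left hA (mul_nonneg (Nat.cast_nonneg l) hD)]

end Ista

theorem statement9_general {n N m : ℕ} (A : Matrix (Fin n) (Fin N) ℝ)
    (τ lam : ℝ) (hτ : 0 < τ) (hlam : 0 < lam) (hA : τ * specNorm A ^ 2 ≤ 1)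
    (Y : Matrix (Fin n) (Fin m) ℝ) (L : ℕ) (Bout : ℝ) (hBout : 0 < Bout)
    (Φ₁ Φ₂ Ψ₁ Ψ₂ : Matrix (Fin N) (Fin N) ℝ)
    (hΦ₁ : IsOrthogonal Φ₁) (hΦ₂ : IsOrthogonal Φ₂)
    (hΨ₂ : IsOrthogonal Ψ₂) :
    frobNorm (sigmaMat Bout (Ψ₁ * ista A τ lam Φ₁ Y L) -
              sigmaMat Bout (Ψ₂ * ista A τ lam Φ₂ Y L)) ≤
      τ * frobNorm Y * ((L : ℝ) * specNorm A * specNorm (Ψ₁ - Ψ₂) +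
        (L : ℝ) * ((L : ℝ) + 3) * specNorm (A * Φ₁ - A * Φ₂)) := by
  set X₁ := ista A τ lam Φ₁ Y L
  set X₂ := ista A τ lam Φ₂ Y L
  have hD : 0 ≤ τ * frobNorm Y * specNorm (A * Φ₁ - A * Φ₂) :=
    mul_nonneg (mul_nonneg hτ.le (frobNorm_nonneg Y)) (specNorm_nonneg _)
  calc _ ≤ frobNorm (Ψ₁ * X₁ - Ψ₂ * X₂) := frobNorm_sigmaMat_sub_le hBout.le _ _
    _ = frobNorm ((Ψ₁ - Ψ₂) * X₁ + Ψ₂ * (X₁ - X₂)) := by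
        rw [Matrix.sub_mul, Matrix.mul_sub]
        abel_nf
    _ ≤ specNorm (Ψ₁ - Ψ₂) * frobNorm X₁ + 1 * frobNorm (X₁ - X₂) :=
        (frobNorm_add_le _ _).trans
          (add_le_add (frobNorm_mul_le _ _) (frobNorm_mul_le_of_specNorm_le hΨ₂.specNorm_le_one _))
    _ ≤ specNorm (Ψ₁ - Ψ₂) * (L * (τ * specNorm A * frobNorm Y)) +
          1 * (L ^ 2 * (τ * frobNorm Y * specNorm (A * Φ₁ - A * Φ₂))) := by
        gcongr
        · exact specNorm_nonneg _
        · exact frobNorm_ista_le A hτ.le hlam.le hA hΦ₁ Y L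
        · exact frobNorm_ista_sub_le A hτ.le hlam.le hA hΦ₁ hΦ₂ Y L
    _ ≤ _ := by nlinarith [mul_nonneg (Nat.cast_nonneg L : (0 : ℝ) ≤ L) hD]

theorem statement9 {n N m : ℕ} (A : Matrix (Fin n) (Fin N) ℝ)
    (τ lam : ℝ) (hτ : 0 < τ) (hlam : 0 < lam) (hA : τ * specNorm A ^ 2 ≤ 1)
    (Y : Matrix (Fin n) (Fin m) ℝ) (L : ℕ) (hL : 2 ≤ L) (Bout : ℝ) (hBout : 0 < Bout)
    (Φ₁ Φ₂ Ψ₁ Ψ₂ : Matrix (Fin N) (Fin N) ℝ)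
    (hΦ₁ : IsOrthogonal Φ₁) (hΦ₂ : IsOrthogonal Φ₂)
    (hΨ₁ : IsOrthogonal Ψ₁) (hΨ₂ : IsOrthogonal Ψ₂) :
    frobNorm (sigmaMat Bout (Ψ₁ * ista A τ lam Φ₁ Y L) -
              sigmaMat Bout (Ψ₂ * ista A τ lam Φ₂ Y L)) ≤
      τ * frobNorm Y * ((L : ℝ) * specNorm A * specNorm (Ψ₁ - Ψ₂) +
        (L : ℝ) * ((L : ℝ) + 3) * specNorm (A * Φ₁ - A * Φ₂)) :=
  statement9_general A τ lam hτ hlam hA Y L Bout hBout Φ₁ Φ₂ Ψ₁ Ψ₂ hΦ₁ hΦ₂ hΨ₂
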